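/- arXiv:1402.4184 — 8 statements merged into one kernel-verified Lean document; each statement's English description precedes it below -/
import Mathlib

section
/- Let G be a countable group, let G ↷ X be a Borel action on a standard Borel space X, and let μ be a G-quasi-invariant Borel probability measure on X. Then the set B_μ of Borel sets A ⊆ X for which there exists a G-invariant μ-conull Borel set X₀ ⊆ X such that for all x ∈ X₀ and g ∈ G, f_A(g·x) = f_A(x) implies g·x = x (i.e., f_A is class-bijective on some G-invariant conull set) is a G_δ set (a countable intersection of open sets) in the pseudometric space of Borel subsets of X with pseudometric d(A,B) = μ(A Δ B). -/
open MeasureTheory Set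
open scoped ENNReal

/-!
Call `x` a collision of `A` along `g` on `S ⊆ G` if `g` moves `x` while `f_A (g • x)` and `f_A x`
agree on `S`. Since the `G`-saturation of a null set is null by quasi-invariance, `A ∈ B_μ` iff
for every `g` the collisions on `S = G` form a null set. These are the decreasing intersection of
the collisions on finite `S`, so by continuity from above they are null iff for every `k` some
finite `S` has collisions of measure `< 1/k`. For fixed finite `S`, moving `A` to `B` changes the
collisions only inside finitely many translates of `A Δ B`, which are small when `μ (A Δ B)` is by
absolute continuity of the translates of `μ`; so each of these countably many conditions is open.
-/

namespace MeasureTheory.Measure.AbsolutelyContinuous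

variable {X : Type*} [MeasurableSpace X] {μ ν : Measure X}

theorem exists_pos_forall_measure_lt [IsFiniteMeasure ν] [SigmaFinite μ] (h : ν ≪ μ)
    {δ : ℝ≥0∞} (hδ : δ ≠ 0) : ∃ ε > 0, ∀ s, μ s < ε → ν s < δ := by
  have hfin : ∫⁻ x, ν.rnDeriv μ x ∂μ ≠ ∞ := by
    rw [Measure.lintegral_rnDeriv h]
    exact measure_ne_top ν univ
  obtain ⟨ε, hε, hsmall⟩ := exists_pos_setLIntegral_lt_of_measure_lt hfin hδ
  exact ⟨ε, hε, fun s hs => Measure.setLIntegral_rnDeriv h s ▸ hsmall s hs⟩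

end MeasureTheory.Measure.AbsolutelyContinuous

theorem Antitone.measure_iInter_eq_zero_iff {X ι : Type*} [MeasurableSpace X]
    {μ : Measure X} [IsFiniteMeasure μ] [Preorder ι] [IsDirectedOrder ι] [Nonempty ι]
    [(Filter.atTop : Filter ι).IsCountablyGenerated] {s : ι → Set X} (hs : Antitone s)
    (hsm : ∀ i, NullMeasurableSet (s i) μ) :
    μ (⋂ i, s i) = 0 ↔ ∀ k : ℕ, ∃ i, μ (s i) < (k : ℝ≥0∞)⁻¹ := by
  rw [hs.measure_iInter hsm ⟨Classical.arbitrary ι, measure_ne_top μ _⟩, ← bot_eq_zero,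
    iInf_eq_bot]
  refine ⟨fun h k => h _ (ENNReal.inv_pos.mpr (ENNReal.natCast_ne_top k)), fun h b hb => ?_⟩
  obtain ⟨k, hk⟩ := ENNReal.exists_inv_nat_lt hb.ne'
  obtain ⟨i, hi⟩ := h k
  exact ⟨i, hi.trans hk⟩

section Action

variable {G X : Type*} [Group G] [MulAction G X]

def collisionSet (S : Set G) (g : G) (A : Set X) : Set X :=
  {x | (∀ h ∈ S, (h⁻¹ • g • x ∈ A ↔ h⁻¹ • x ∈ A)) ∧ g • x ≠ x}

theorem collisionSet_anti (g : G) (A : Set X) :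
    Antitone fun S : Set G => collisionSet S g A :=
  fun _ _ hST _ hx => ⟨fun h hh => hx.1 h (hST hh), hx.2⟩

theorem iInter_collisionSet_finset (g : G) (A : Set X) :
    ⋂ S : Finset G, collisionSet (S : Set G) g A = collisionSet univ g A := by
  refine Subset.antisymm (fun x hx => ⟨fun h _ => ?_, ?_⟩) ?_
  · exact (mem_iInter.mp hx {h}).1 h (Finset.mem_singleton_self h)
  · exact (mem_iInter.mp hx ∅).2
  · exact subset_iInter fun S => collisionSet_anti g A (subset_univ _)

theorem collisionSet_subset_union (S : Set G) (g : G) (A B : Set X) :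
    collisionSet S g B ⊆ collisionSet S g A ∪
      ⋃ h ∈ S, ((fun x => (h⁻¹ * g) • x) ⁻¹' symmDiff A B ∪
        (fun x => h⁻¹ • x) ⁻¹' symmDiff A B) := by
  intro x ⟨hB, hmoved⟩
  by_contra hx
  simp only [mem_union, mem_iUnion, mem_preimage, mul_smul, mem_symmDiff, not_or,
    not_exists] at hx
  exact hx.1 ⟨fun h hh => by have := hB h hh; have := hx.2 h hh; tauto, hmoved⟩

variable [MeasurableSpace X]

theorem quasiMeasurePreserving_smul_of_image_null {μ : Measure X}
    (hmeas : ∀ g : G, Measurable fun x : X => g • x)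
    (hqi : ∀ (g : G) (A : Set X), MeasurableSet A → μ A = 0 → μ ((fun x => g • x) '' A) = 0)
    (g : G) : Measure.QuasiMeasurePreserving (fun x : X => g • x) μ μ := by
  refine ⟨hmeas g, Measure.AbsolutelyContinuous.mk fun s hs hs0 => ?_⟩
  rw [Measure.map_apply (hmeas g) hs, preimage_smul, ← image_smul]
  exact hqi g⁻¹ s hs hs0

theorem exists_smul_invariant_conull_disjoint [Countable G] {μ : Measure X}
    (hqi : ∀ g : G, Measure.QuasiMeasurePreserving (fun x : X => g • x) μ μ)
    {N : Set X} (hN : MeasurableSet N) (hN0 : μ N = 0) :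
    ∃ X₀ : Set X, MeasurableSet X₀ ∧ (∀ g : G, (fun x => g • x) '' X₀ ⊆ X₀) ∧
      μ X₀ᶜ = 0 ∧ Disjoint X₀ N := by
  refine ⟨(⋃ g : G, (fun x => g • x) ⁻¹' N)ᶜ,
    (MeasurableSet.iUnion fun g => (hqi g).measurable hN).compl, ?_,
    by rw [compl_compl]; exact measure_iUnion_null fun g => (hqi g).preimage_null hN0, ?_⟩
  · rintro g _ ⟨x, hx, rfl⟩
    simp only [mem_compl_iff, mem_iUnion, mem_preimage, not_exists, smul_smul] at hx ⊢
    exact fun h => hx (h * g)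
  · refine Set.disjoint_left.mpr fun x hx hxN => hx ?_
    exact mem_iUnion.mpr ⟨1, by simpa using hxN⟩

theorem measurableSet_collisionSet [Countable G] [MeasurableEq X]
    (hmeas : ∀ g : G, Measurable fun x : X => g • x) (S : Set G) (g : G) {A : Set X}
    (hA : MeasurableSet A) : MeasurableSet (collisionSet S g A) := by
  have hmem : ∀ c : G, Measurable fun x : X => c • x ∈ A := fun c => hA.mem.comp (hmeas c)
  simp only [collisionSet, ← mul_smul]
  exact measurableSet_setOfPred.mpr (by fun_prop)

theorem measure_collisionSet_le (μ : Measure X) (hmeas : ∀ g : G, Measurable fun x : X => g • x)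
    (S : Finset G) (g : G) (A B : Set X) :
    μ (collisionSet S g B) ≤ μ (collisionSet S g A) +
      (∑ h ∈ S, (μ.map (fun x => (h⁻¹ * g) • x) + μ.map (fun x => h⁻¹ • x))) (symmDiff A B) := by
  rw [Measure.finsetSum_apply]
  refine (measure_mono (collisionSet_subset_union (S : Set G) g A B)).trans <|
    (measure_union_le _ _).trans <| add_le_add_right ?_ _
  refine (measure_biUnion_finset_le S _).trans <| Finset.sum_le_sum fun h _ => ?_
  exact (measure_union_le _ _).trans <| add_le_add
    (Measure.le_map_apply (hmeas _).aemeasurable _) (Measure.le_map_apply (hmeas _).aemeasurable _)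

theorem exists_pos_forall_measure_collisionSet_lt {μ : Measure X} [IsFiniteMeasure μ]
    (hqi : ∀ g : G, Measure.QuasiMeasurePreserving (fun x : X => g • x) μ μ)
    (S : Finset G) (g : G) {A : Set X} {b : ℝ≥0∞} (hb : μ (collisionSet S g A) < b) :
    ∃ ε > 0, ∀ B : Set X, μ (symmDiff A B) < ε → μ (collisionSet S g B) < b := by
  obtain ⟨r, hr0, hr⟩ := ENNReal.lt_iff_exists_add_pos_lt.mp hb
  set ν := ∑ h ∈ S, (μ.map (fun x => (h⁻¹ * g) • x) + μ.map (fun x => h⁻¹ • x))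
  have hν : ν ≪ μ := fun s hs => by
    rw [Measure.finsetSum_apply]
    exact Finset.sum_eq_zero fun h _ =>
      ((hqi _).absolutelyContinuous.add_left (hqi _).absolutelyContinuous) hs
  obtain ⟨ε, hε, hsmall⟩ := hν.exists_pos_forall_measure_lt (ENNReal.coe_ne_zero.mpr hr0.ne')
  refine ⟨ε, hε, fun B hB => ?_⟩
  calc μ (collisionSet S g B) ≤ μ (collisionSet S g A) + ν (symmDiff A B) :=
        measure_collisionSet_le μ (fun c => (hqi c).measurable) S g A B
    _ < μ (collisionSet S g A) + r := ENNReal.add_lt_add_left (measure_ne_top μ _) (hsmall _ hB)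
    _ < b := hr

theorem exists_invariant_conull_iff_measure_collisionSet_eq_zero [Countable G] [MeasurableEq X]
    {μ : Measure X} (hqi : ∀ g : G, Measure.QuasiMeasurePreserving (fun x : X => g • x) μ μ)
    {A : Set X} (hA : MeasurableSet A) :
    (∃ X₀ : Set X, MeasurableSet X₀ ∧ (∀ g : G, (fun x => g • x) '' X₀ ⊆ X₀) ∧ μ X₀ᶜ = 0 ∧
        ∀ x ∈ X₀, ∀ g : G, (∀ h : G, (h⁻¹ • (g • x) ∈ A ↔ h⁻¹ • x ∈ A)) → g • x = x) ↔
      ∀ g : G, μ (collisionSet univ g A) = 0 := by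
  constructor
  · rintro ⟨X₀, -, -, hnull, hfree⟩ g
    exact measure_mono_null (fun x hx hx₀ => hx.2 (hfree x hx₀ g fun h => hx.1 h trivial)) hnull
  · intro hnull
    have hN := MeasurableSet.iUnion fun g : G =>
      measurableSet_collisionSet (fun c => (hqi c).measurable) univ g hA
    obtain ⟨X₀, hX₀, hinv, hX₀null, hdisj⟩ :=
      exists_smul_invariant_conull_disjoint hqi hN (measure_iUnion_null hnull)
    refine ⟨X₀, hX₀, hinv, hX₀null, fun x hx g hagree => ?_⟩
    by_contra hmoved
    exact hdisj.notMem_of_mem_left hx (mem_iUnion.mpr ⟨g, fun h _ => hagree h, hmoved⟩)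

theorem measure_collisionSet_univ_eq_zero_iff [Countable G] [MeasurableEq X]
    {μ : Measure X} [IsFiniteMeasure μ] (hmeas : ∀ g : G, Measurable fun x : X => g • x)
    (g : G) {A : Set X} (hA : MeasurableSet A) :
    μ (collisionSet univ g A) = 0 ↔
      ∀ k : ℕ, ∃ S : Finset G, μ (collisionSet S g A) < (k : ℝ≥0∞)⁻¹ := by
  rw [← iInter_collisionSet_finset]
  exact Antitone.measure_iInter_eq_zero_iff
    (fun _ _ hST => collisionSet_anti g A (Finset.coe_subset.mpr hST))
    fun S => (measurableSet_collisionSet hmeas S g hA).nullMeasurableSet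

end Action

/-- Proposition 3.1 (`Gδ`-ness of the class-bijective sets): for a Borel action `G ↷ X`
with a `G`-quasi-invariant Borel probability measure `μ`, the collection `B_μ` of Borel sets
`A ⊆ X` such that the induced equivariant map `f_A : X → 2^G` is class-bijective on some
`G`-invariant conull set is a `Gδ` subset of the pseudometric space of Borel subsets of `X`
with pseudometric `d(A,B) = μ (A Δ B)`:  it is the intersection of a sequence of sets `U n`
of Borel sets, each of which is open in the sense that it contains a `d`-ball around each of
its members. -/
theorem classBijective_sets_Gdelta
    {G : Type*} [Group G] [Countable G]
    {X : Type*} [MeasurableSpace X] [StandardBorelSpace X] [MulAction G X]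
    (hBorel : ∀ g : G, Measurable fun x : X => g • x)
    (μ : Measure X) [IsProbabilityMeasure μ]
    (hqi : ∀ (g : G) (A : Set X), MeasurableSet A →
      (μ ((fun x => g • x) '' A) = 0 ↔ μ A = 0)) :
    ∃ U : ℕ → Set (Set X),
      (∀ n, ∀ A ∈ U n, MeasurableSet A ∧
        ∃ ε : ℝ≥0∞, 0 < ε ∧
          ∀ B : Set X, MeasurableSet B → μ (symmDiff A B) < ε → B ∈ U n) ∧
      (∀ A : Set X, MeasurableSet A →
        ((∀ n, A ∈ U n) ↔
          ∃ X₀ : Set X, MeasurableSet X₀ ∧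
            (∀ g : G, (fun x => g • x) '' X₀ ⊆ X₀) ∧ μ X₀ᶜ = 0 ∧
            ∀ x ∈ X₀, ∀ g : G,
              (∀ h : G, (h⁻¹ • (g • x) ∈ A ↔ h⁻¹ • x ∈ A)) → g • x = x)) := by
  have hqmp := quasiMeasurePreserving_smul_of_image_null hBorel fun g A hA => (hqi g A hA).mpr
  obtain ⟨σ, hσ⟩ := exists_surjective_nat (G × ℕ)
  refine ⟨fun m => {A | MeasurableSet A ∧
    ∃ S : Finset G, μ (collisionSet S (σ m).1 A) < ((σ m).2 : ℝ≥0∞)⁻¹}, ?_, fun A hA => ?_⟩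
  · rintro m A ⟨hA, S, hS⟩
    obtain ⟨ε, hε, hball⟩ := exists_pos_forall_measure_collisionSet_lt hqmp S _ hS
    exact ⟨hA, ε, hε, fun B hB hAB => ⟨hB, S, hball B hAB⟩⟩
  · simp only [exists_invariant_conull_iff_measure_collisionSet_eq_zero hqmp hA,
      measure_collisionSet_univ_eq_zero_iff hBorel _ hA, mem_ofPred_eq, hA, true_and]
    rw [← Prod.forall', hσ.forall]
end

section
/- Let L = (R_i)_{i∈I} be a countable relational language (R_i of arity n_i) and let K be a class of countable L-structures closed under isomorphism. Let E and F be countable Borel equivalence relations on standard Borel spaces X and Y respectively, and suppose there exists a class-bijective Borel homomorphism f : X → Y from E to F. If F is Borel K-structurable, then E is Borel K-structurable. -/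
open MeasureTheory Set

universe u

/-- `E` is Borel `K`-structurable, where the countable relational language has relation
symbols indexed by `I` with arities `n i`, and `K α R` expresses that the `L`-structure with
(countable) carrier `α` and interpretations `R` belongs to the class `K`:  there are Borel
sets `Q i` of `E`-equivalent `n i`-tuples such that each `E`-class, equipped with the
restricted relations, is a structure in `K`. -/
def BorelStructurable {I : Type} (n : I → ℕ)
    (K : (α : Type u) → ((i : I) → (Fin (n i) → α) → Prop) → Prop)
    {X : Type u} [MeasurableSpace X] (E : X → X → Prop) : Prop :=
  ∃ Q : (i : I) → Set (Fin (n i) → X),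
    (∀ i, MeasurableSet (Q i)) ∧
    (∀ i, ∀ t ∈ Q i, ∀ j k, E (t j) (t k)) ∧
    ∀ x : X, K {y : X // E x y} (fun i t => (fun j => ((t j : X))) ∈ Q i)

/-!
The structure on an `E`-class is copied from the `F`-class it is mapped onto: a tuple of
`E`-equivalent points is declared to satisfy `R i` exactly when its image under `f` lies in the
given Borel set `Q i`. Class-bijectivity makes `f` an isomorphism between each `E`-class with
this structure and the corresponding `F`-class, so the former lies in `K`.
-/

section

variable {ι X Y : Type*}

def relPreimage (E : X → X → Prop) (f : X → Y) (Q : Set (ι → Y)) : Set (ι → X) :=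
  {t | (∀ j k, E (t j) (t k)) ∧ f ∘ t ∈ Q}

theorem mem_relPreimage_iff_of_rel {E : X → X → Prop} (hE : Equivalence E) {f : X → Y}
    {Q : Set (ι → Y)} {x : X} {t : ι → X} (ht : ∀ j, E x (t j)) :
    t ∈ relPreimage E f Q ↔ f ∘ t ∈ Q :=
  ⟨And.right, fun hQ => ⟨fun j k => hE.trans (hE.symm (ht j)) (ht k), hQ⟩⟩

variable [MeasurableSpace X] [MeasurableSpace Y]

theorem measurableSet_setOf_forall_rel [Countable ι] {E : X → X → Prop}
    (hE : MeasurableSet {p : X × X | E p.1 p.2}) :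
    MeasurableSet {t : ι → X | ∀ j k, E (t j) (t k)} := by
  simp only [ofPred_forall]
  exact .iInter fun j => .iInter fun k =>
    hE.preimage (f := fun t : ι → X => (t j, t k))
      ((measurable_pi_apply j).prodMk (measurable_pi_apply k))

theorem measurableSet_relPreimage [Countable ι] {E : X → X → Prop}
    (hE : MeasurableSet {p : X × X | E p.1 p.2}) {f : X → Y} (hf : Measurable f)
    {Q : Set (ι → Y)} (hQ : MeasurableSet Q) :
    MeasurableSet (relPreimage E f Q) :=
  (measurableSet_setOf_forall_rel hE).inter
    (hQ.preimage (measurable_pi_lambda _ fun j => hf.comp (measurable_pi_apply j)))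

end

theorem structurable_of_classBijective_hom_general
    {I : Type} (n : I → ℕ)
    (K : (α : Type u) → ((i : I) → (Fin (n i) → α) → Prop) → Prop)
    (hKiso : ∀ (α β : Type u)
      (Rα : (i : I) → (Fin (n i) → α) → Prop) (Rβ : (i : I) → (Fin (n i) → β) → Prop)
      (e : α ≃ β), (∀ i t, Rα i t ↔ Rβ i (fun j => e (t j))) → (K α Rα ↔ K β Rβ))
    {X Y : Type u} [MeasurableSpace X]
    [MeasurableSpace Y]
    (E : X → X → Prop) (F : Y → Y → Prop)
    (hE : Equivalence E)
    (hEmeas : MeasurableSet {p : X × X | E p.1 p.2})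
    (f : X → Y) (hf : Measurable f)
    (hcb : ∀ x : X, Set.BijOn f {x' | E x x'} {y | F (f x) y})
    (hFstr : BorelStructurable n K F) :
    BorelStructurable n K E := by
  obtain ⟨Q, hQmeas, -, hQK⟩ := hFstr
  refine ⟨fun i => relPreimage E f (Q i), fun i => measurableSet_relPreimage hEmeas hf (hQmeas i),
    fun i t ht => ht.1, fun x => ?_⟩
  refine (hKiso _ _ _ _ ((hcb x).equiv f) fun i t => ?_).mpr (hQK (f x))
  exact mem_relPreimage_iff_of_rel hE fun j => (t j).2

/-- Proposition 2.1: Borel `K`-structurability pulls back through class-bijective Borel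
homomorphisms of countable Borel equivalence relations, for any isomorphism-closed class `K`
of countable structures in a countable relational language. -/
theorem structurable_of_classBijective_hom
    {I : Type} [Countable I] (n : I → ℕ)
    (K : (α : Type u) → ((i : I) → (Fin (n i) → α) → Prop) → Prop)
    (hKiso : ∀ (α β : Type u)
      (Rα : (i : I) → (Fin (n i) → α) → Prop) (Rβ : (i : I) → (Fin (n i) → β) → Prop)
      (e : α ≃ β), (∀ i t, Rα i t ↔ Rβ i (fun j => e (t j))) → (K α Rα ↔ K β Rβ))
    {X Y : Type u} [MeasurableSpace X] [StandardBorelSpace X]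
    [MeasurableSpace Y] [StandardBorelSpace Y]
    (E : X → X → Prop) (F : Y → Y → Prop)
    (hE : Equivalence E) (hF : Equivalence F)
    (hEmeas : MeasurableSet {p : X × X | E p.1 p.2})
    (hFmeas : MeasurableSet {p : Y × Y | F p.1 p.2})
    (hEcntble : ∀ x : X, Set.Countable {x' | E x x'})
    (hFcntble : ∀ y : Y, Set.Countable {y' | F y y'})
    (f : X → Y) (hf : Measurable f)
    (hhom : ∀ x x' : X, E x x' → F (f x) (f x'))
    (hcb : ∀ x : X, Set.BijOn f {x' | E x x'} {y | F (f x) y})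
    (hFstr : BorelStructurable n K F) :
    BorelStructurable n K E :=
  structurable_of_classBijective_hom_general n K hKiso E F hE hEmeas f hf hcb hFstr
end

section
/- Let G be a countably infinite discrete group and let G ↷ X be a free Borel action on a standard Borel space X. If P ⊆ X is a syndetic Borel subset of X, then there exists a Borel set M ⊆ P such that both M and P \ M are syndetic. -/
/-!
Fix a finite `F` with `F • P = X`. For a finite symmetric `K ∋ 1`, call `D` `K`-discrete if no
element of `K ∖ {1}` maps a point of `D` into `D`. Freeness yields a countable Borel cover of `X`
by `K`-discrete sets, and a greedy pass over it gives a Borel `K`-discrete `D` with `K • D = X`.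
Put `M := P ∩ F⁻¹ • D`; then `X = K • D ⊆ (K * F) • M`.

Choose `u` with `F * F⁻¹` and `u • (F * F⁻¹)` disjoint, and let `K` contain all quotients of
elements of `S := F * F⁻¹ ∪ u • (F * F⁻¹)`. Every point lies in `F • (P \ M)` or in
`F • M ⊆ (F * F⁻¹) • D`, and likewise with `u • F` in place of `F`. Since `D` is `K`-discrete,
`(F * F⁻¹) • D` and `(u • (F * F⁻¹)) • D` are disjoint, so `X = (F ∪ u • F) • (P \ M)`.
-/

open MeasureTheory Set Pointwise

/-- `M ⊆ X` is syndetic if `F • M = X` for some finite `F ⊆ G`. -/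
def Syndetic {G X : Type*} [Group G] [MulAction G X] (M : Set X) : Prop :=
  ∃ F : Finset G, ∀ x : X, ∃ g ∈ F, g⁻¹ • x ∈ M

section

variable {G X : Type*} [Group G] [MulAction G X]

def IsSMulDiscrete (K : Set G) (D : Set X) : Prop :=
  ∀ x ∈ D, ∀ k ∈ K, k • x ∈ D → k = 1

theorem IsSMulDiscrete.anti {K L : Set G} {D : Set X} (hD : IsSMulDiscrete L D)
    (hKL : K ⊆ L) : IsSMulDiscrete K D :=
  fun x hx k hk hkx => hD x hx k (hKL hk) hkx

theorem isSMulDiscrete_singleton_diff_inv_smul (k : G) (s : Set X) :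
    IsSMulDiscrete {k} (s \ k⁻¹ • s) := by
  rintro x ⟨-, hx⟩ _ rfl ⟨hkx, -⟩
  exact absurd (mem_inv_smul_set_iff.2 hkx) hx

theorem isSMulDiscrete_iUnion_of_monotone {K : Set G} {D : ℕ → Set X} (hmono : Monotone D)
    (hD : ∀ n, IsSMulDiscrete K (D n)) : IsSMulDiscrete K (⋃ n, D n) := by
  intro x hx k hk hkx
  obtain ⟨m, hm⟩ := mem_iUnion.1 hx
  obtain ⟨n, hn⟩ := mem_iUnion.1 hkx
  exact hD (max m n) x (hmono (le_max_left m n) hm) k hk (hmono (le_max_right m n) hn)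

theorem IsSMulDiscrete.disjoint_smul {S A B : Set G} {D : Set X}
    (hD : IsSMulDiscrete (S⁻¹ * S) D) (hA : A ⊆ S) (hB : B ⊆ S) (hAB : Disjoint A B) :
    Disjoint (A • D) (B • D) := by
  rw [disjoint_left]
  intro x hxA hxB
  obtain ⟨a, ha, d, hd, rfl⟩ := mem_smul.1 hxA
  obtain ⟨b, hb, e, he, hbe⟩ := mem_smul.1 hxB
  have hba : (b⁻¹ * a) • d ∈ D := by rwa [mul_smul, ← hbe, inv_smul_smul]
  have := hD d hd _ (mul_mem_mul (inv_mem_inv.2 (hB hb)) (hA ha)) hba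
  exact hAB.ne_of_mem ha hb (inv_mul_eq_one.1 this).symm

theorem exists_disjoint_smul_self [Infinite G] {A : Set G} (hA : A.Finite) :
    ∃ u : G, Disjoint A (u • A) := by
  obtain ⟨u, hu⟩ := (hA.mul hA.inv).infinite_compl.nonempty
  refine ⟨u, disjoint_left.2 ?_⟩
  rintro _ ha ⟨b, hb, rfl⟩
  exact hu ⟨u * b, ha, b⁻¹, inv_mem_inv.2 hb, mul_inv_cancel_right u b⟩

theorem subset_smul_inter_inv_smul {F : Set G} {P D : Set X} (h : D ⊆ F • P) :
    D ⊆ F • (P ∩ F⁻¹ • D) := by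
  intro d hd
  obtain ⟨g, hg, p, hp, rfl⟩ := h hd
  exact ⟨g, hg, p, ⟨hp, g⁻¹, inv_mem_inv.2 hg, _, hd, inv_smul_smul g p⟩, rfl⟩

theorem union_smul_diff_eq_univ {F F' : Set G} {P Q : Set X} (hF : F • P = univ)
    (hF' : F' • P = univ) (hQ : Disjoint (F • Q) (F' • Q)) : (F ∪ F') • (P \ Q) = univ := by
  have hcover : ∀ {E : Set G}, E • P = univ → univ ⊆ E • (P \ Q) ∪ E • Q := fun hE =>
    hE ▸ fun _ ⟨g, hg, p, hp, hgp⟩ => by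
      by_cases hpQ : p ∈ Q
      exacts [Or.inr ⟨g, hg, p, hpQ, hgp⟩, Or.inl ⟨g, hg, p, ⟨hp, hpQ⟩, hgp⟩]
  refine eq_univ_of_forall fun x => ?_
  rw [union_smul]
  rcases hcover hF (mem_univ x) with h | h
  · exact Or.inl h
  rcases hcover hF' (mem_univ x) with h' | h'
  · exact Or.inr h'
  exact absurd h' (disjoint_left.1 hQ h)

theorem syndetic_iff_exists_finite_smul_eq_univ {M : Set X} :
    Syndetic (G := G) M ↔ ∃ F : Set G, F.Finite ∧ F • M = univ := by
  constructor
  · rintro ⟨F, hF⟩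
    refine ⟨F, F.finite_toSet, eq_univ_of_forall fun x => ?_⟩
    obtain ⟨g, hg, hx⟩ := hF x
    exact ⟨g, hg, _, hx, smul_inv_smul g x⟩
  · rintro ⟨F, hF, hFM⟩
    refine ⟨hF.toFinset, fun x => ?_⟩
    obtain ⟨g, hg, m, hm, rfl⟩ := hFM ▸ mem_univ x
    exact ⟨g, hF.mem_toFinset.2 hg, by rwa [inv_smul_smul]⟩

section Measurable

variable [MeasurableSpace X]

theorem exists_measurableSet_separating [MeasurableSpace.CountablySeparated X] :
    ∃ s : ℕ × Bool → Set X, (∀ i, MeasurableSet (s i)) ∧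
      ∀ x y, x ≠ y → ∃ i, x ∈ s i ∧ y ∉ s i := by
  obtain ⟨f, hf, hinj⟩ :=
    MeasurableSpace.measurable_injection_nat_bool_of_countablySeparated X
  refine ⟨fun i => (fun x => f x i.1) ⁻¹' {i.2},
    fun i => (measurable_pi_apply i.1).comp hf (measurableSet_singleton _), fun x y hxy => ?_⟩
  obtain ⟨n, hn⟩ := Function.ne_iff.1 (hinj.ne hxy)
  exact ⟨(n, f x n), rfl, Ne.symm hn⟩

variable [MeasurableConstSMul G X]

theorem Set.Finite.measurableSet_smul {K : Set G} (hK : K.Finite) {D : Set X}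
    (hD : MeasurableSet D) : MeasurableSet (K • D) := by
  rw [← iUnion_smul_set]
  exact hK.measurableSet_biUnion fun k _ => hD.const_smul k

theorem exists_measurableSet_cover_isSMulDiscrete [MeasurableSpace.CountablySeparated X]
    (hfree : ∀ (g : G) (x : X), g • x = x → g = 1) {K : Set G} (hK : K.Finite) :
    ∃ A : ℕ → Set X, (∀ n, MeasurableSet (A n)) ∧ ⋃ n, A n = univ ∧
      ∀ n, IsSMulDiscrete K (A n) := by
  obtain ⟨s, hs, hsep⟩ := exists_measurableSet_separating (X := X)
  have : Finite ↥(K \ {1}) := (hK.sdiff).to_subtype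
  obtain ⟨e, he⟩ := exists_surjective_nat (↥(K \ {1}) → ℕ × Bool)
  let B : (↥(K \ {1}) → ℕ × Bool) → Set X :=
    fun v => ⋂ k, s (v k) \ (k : G)⁻¹ • s (v k)
  refine ⟨fun n => B (e n), fun n => .iInter fun k => (hs _).diff ((hs _).const_smul _),
    ?_, ?_⟩
  · refine eq_univ_of_forall fun x => ?_
    have : ∀ k : ↥(K \ {1}), ∃ i, x ∈ s i ∧ (k : G) • x ∉ s i :=
      fun k => hsep _ _ fun h => k.2.2 (hfree _ _ h.symm)
    choose v hv using this
    obtain ⟨n, rfl⟩ := he v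
    exact mem_iUnion.2
      ⟨n, mem_iInter.2 fun k => ⟨(hv k).1, mem_inv_smul_set_iff.not.2 (hv k).2⟩⟩
  · intro n x hx k hk hkx
    by_contra hk1
    let k' : ↥(K \ {1}) := ⟨k, hk, hk1⟩
    exact hk1 (isSMulDiscrete_singleton_diff_inv_smul k _ x (mem_iInter.1 hx k') k rfl
      (mem_iInter.1 hkx k'))

end Measurable

section Greedy

variable (K : Set G) (A : ℕ → Set X)

def greedyDiscrete : ℕ → Set X
  | 0 => ∅
  | m + 1 => greedyDiscrete m ∪ (A m \ K • greedyDiscrete m)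

theorem greedyDiscrete_mono : Monotone (greedyDiscrete K A) :=
  monotone_nat_of_le_succ fun _ => subset_union_left

variable {K A}

theorem measurableSet_greedyDiscrete [MeasurableSpace X] [MeasurableConstSMul G X]
    (hK : K.Finite) (hA : ∀ n, MeasurableSet (A n)) (m : ℕ) :
    MeasurableSet (greedyDiscrete K A m) := by
  induction m with
  | zero => exact .empty
  | succ m ih => exact ih.union ((hA m).diff (hK.measurableSet_smul ih))

theorem isSMulDiscrete_greedyDiscrete (hKinv : K⁻¹ = K) (hA : ∀ n, IsSMulDiscrete K (A n))
    (m : ℕ) : IsSMulDiscrete K (greedyDiscrete K A m) := by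
  induction m with
  | zero => exact fun x hx => absurd hx (notMem_empty x)
  | succ m ih =>
    rintro x (hx | ⟨hxA, hxK⟩) k hk (hkx | ⟨hkxA, hkxK⟩)
    · exact ih x hx k hk hkx
    · exact absurd (smul_mem_smul hk hx) hkxK
    · have hk' : k⁻¹ ∈ K := hKinv ▸ inv_mem_inv.2 hk
      exact absurd (inv_smul_smul k x ▸ smul_mem_smul hk' hkx) hxK
    · exact hA m x hxA k hk hkxA

theorem subset_smul_iUnion_greedyDiscrete (hK1 : 1 ∈ K) (n : ℕ) :
    A n ⊆ K • ⋃ m, greedyDiscrete K A m := by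
  intro x hx
  by_cases hxK : x ∈ K • greedyDiscrete K A n
  · exact smul_subset_smul_left (subset_iUnion _ n) hxK
  · exact ⟨1, hK1, x, mem_iUnion.2 ⟨n + 1, Or.inr ⟨hx, hxK⟩⟩, one_smul G x⟩

end Greedy

theorem exists_measurableSet_isSMulDiscrete_smul_eq_univ [MeasurableSpace X]
    [MeasurableSpace.CountablySeparated X] [MeasurableConstSMul G X]
    (hfree : ∀ (g : G) (x : X), g • x = x → g = 1) {K : Set G} (hK : K.Finite)
    (hKinv : K⁻¹ = K) (hK1 : 1 ∈ K) :
    ∃ D : Set X, MeasurableSet D ∧ IsSMulDiscrete K D ∧ K • D = univ := by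
  obtain ⟨A, hAm, hAcover, hAdisc⟩ := exists_measurableSet_cover_isSMulDiscrete hfree hK
  refine ⟨⋃ m, greedyDiscrete K A m, .iUnion (measurableSet_greedyDiscrete hK hAm),
    isSMulDiscrete_iUnion_of_monotone (greedyDiscrete_mono K A)
      (isSMulDiscrete_greedyDiscrete hKinv hAdisc), ?_⟩
  rw [← univ_subset_iff, ← hAcover]
  exact iUnion_subset (subset_smul_iUnion_greedyDiscrete hK1)

end

theorem syndetic_split_general
    {G : Type*} [Group G] [Infinite G]
    {X : Type*} [MeasurableSpace X] [StandardBorelSpace X] [MulAction G X]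
    (hBorel : ∀ g : G, Measurable fun x : X => g • x)
    (hfree : ∀ (g : G) (x : X), g • x = x → g = 1)
    (P : Set X) (hP : MeasurableSet P) (hPsynd : Syndetic (G := G) P) :
    ∃ M : Set X, MeasurableSet M ∧ M ⊆ P ∧
      Syndetic (G := G) M ∧ Syndetic (G := G) (P \ M) := by
  have : MeasurableConstSMul G X := ⟨hBorel⟩
  obtain ⟨F, hF, hFP⟩ := syndetic_iff_exists_finite_smul_eq_univ.1 hPsynd
  obtain ⟨u, hu⟩ := exists_disjoint_smul_self (hF.mul hF.inv)
  set S := F * F⁻¹ ∪ u • (F * F⁻¹)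
  set K := insert 1 (S⁻¹ * S)
  have hS : S.Finite := (hF.mul hF.inv).union (hF.mul hF.inv).smul_set
  have hK : K.Finite := (hS.inv.mul hS).insert 1
  obtain ⟨D, hDm, hDdisc, hDK⟩ := exists_measurableSet_isSMulDiscrete_smul_eq_univ hfree hK
    (by simp [K, inv_insert, mul_inv_rev]) (mem_insert 1 _)
  refine ⟨P ∩ F⁻¹ • D, hP.inter (hF.inv.measurableSet_smul hDm), inter_subset_left, ?_, ?_⟩
  · refine syndetic_iff_exists_finite_smul_eq_univ.2 ⟨K * F, hK.mul hF, univ_subset_iff.1 ?_⟩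
    calc univ = K • D := hDK.symm
      _ ⊆ K • F • (P ∩ F⁻¹ • D) :=
        smul_subset_smul_left (subset_smul_inter_inv_smul (hFP ▸ subset_univ D))
      _ = (K * F) • (P ∩ F⁻¹ • D) := (mul_smul _ _ _).symm
  · have hdisj : Disjoint ((F * F⁻¹) • D) ((u • (F * F⁻¹)) • D) :=
      (hDdisc.anti (subset_insert _ _)).disjoint_smul subset_union_left subset_union_right
        hu
    rw [sdiff_self_inter]
    refine syndetic_iff_exists_finite_smul_eq_univ.2
      ⟨F ∪ u • F, hF.union hF.smul_set, union_smul_diff_eq_univ hFP ?_ ?_⟩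
    · rw [smul_assoc, hFP, smul_set_univ]
    · rwa [smul_assoc, ← mul_smul, ← smul_assoc]

/-- Proposition 3.4.(1): a syndetic Borel set `P` splits into a Borel set `M ⊆ P` such that
both `M` and `P \ M` are syndetic. -/
theorem syndetic_split
    {G : Type*} [Group G] [Countable G] [Infinite G]
    {X : Type*} [MeasurableSpace X] [StandardBorelSpace X] [MulAction G X]
    (hBorel : ∀ g : G, Measurable fun x : X => g • x)
    (hfree : ∀ (g : G) (x : X), g • x = x → g = 1)
    (P : Set X) (hP : MeasurableSet P) (hPsynd : Syndetic (G := G) P) :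
    ∃ M : Set X, MeasurableSet M ∧ M ⊆ P ∧
      Syndetic (G := G) M ∧ Syndetic (G := G) (P \ M) :=
  syndetic_split_general hBorel hfree P hP hPsynd
end

section
/- Let G be a countably infinite discrete group and let G ↷ X be a free Borel action on a standard Borel space X. Then there exists a sequence {M_n}_{n∈ℕ} of pairwise disjoint syndetic Borel subsets of X. -/
/-!
Call `M` `D`-independent if `d • x ∉ M` for `x ∈ M` and `d ∈ D`. For a finite symmetric `D`
acting without fixed points, the sets `V ∖ D⁻¹ • V`, with `V` running through a countable basis of
a compatible Polish topology, are countably many Borel `D`-independent sets covering `X`. Adding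
their points greedily gives a Borel maximal `D`-independent subset `M` of any Borel set `Y`: every
point of `Y` is moved into `M` by some element of `D ∪ {1}`.

The set `M n` is maximal independent in `Uᶜ`, where `U = M 0 ∪ ⋯ ∪ M (n-1)`, and `Uᶜ` stays
syndetic at every step. If every `L • x` meets `Uᶜ` and `t ∉ L⁻¹L`, take `M n` independent for
`L t L⁻¹` and its inverse. If `l • x ∈ M n`, then `l' t l⁻¹` carries it to `l' t • x`, so
`l' t • x ∉ M n`. Hence every `(L ∪ L t) • x` meets `(U ∪ M n)ᶜ`.
-/

open MeasureTheory Set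

open Function Pointwise

lemma exists_pairwise_disjoint_seq_of_step {α : Type*} (P Q : Set α → Prop) (h₀ : P ∅)
    (step : ∀ U, P U → ∃ M, Disjoint U M ∧ Q M ∧ P (U ∪ M)) :
    ∃ M : ℕ → Set α, (∀ n, Q (M n)) ∧ Pairwise (Disjoint on M) := by
  choose next hdisj hQ hP using step
  let U : ℕ → {U // P U} := fun n => Nat.rec ⟨∅, h₀⟩ (fun _ U => ⟨U ∪ next U U.2, hP _ _⟩) n
  let M n := next (U n).1 (U n).2
  have hU_succ (n : ℕ) : (U (n + 1)).1 = (U n).1 ∪ M n := rfl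
  have hU_mono : Monotone fun n => (U n).1 :=
    monotone_nat_of_le_succ fun n => (hU_succ n).symm ▸ subset_union_left
  refine ⟨M, fun n => hQ _ _, (pairwise_disjoint_on M).2 fun m n hmn => ?_⟩
  have hM_sub : M m ⊆ (U n).1 := (hU_succ m ▸ subset_union_right).trans (hU_mono hmn)
  exact (hdisj _ _).mono_left hM_sub

section Action

variable {G X : Type*} [Group G] [MulAction G X]

lemma syndetic_iff {M : Set X} :
    Syndetic (G := G) M ↔ ∃ L : Finset G, ∀ x, ∃ l ∈ L, l • x ∈ M := by
  classical
  constructor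
  · rintro ⟨F, hF⟩
    refine ⟨F⁻¹, fun x => ?_⟩
    obtain ⟨g, hg, hgx⟩ := hF x
    exact ⟨g⁻¹, Finset.inv_mem_inv hg, hgx⟩
  · rintro ⟨L, hL⟩
    refine ⟨L⁻¹, fun x => ?_⟩
    obtain ⟨l, hl, hlx⟩ := hL x
    exact ⟨l⁻¹, Finset.inv_mem_inv hl, by rwa [inv_inv]⟩

lemma syndetic_univ : Syndetic (G := G) (univ : Set X) :=
  syndetic_iff.2 ⟨{1}, fun _ => ⟨1, Finset.mem_singleton_self 1, mem_univ _⟩⟩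

lemma Syndetic.of_forall_exists_smul_mem [DecidableEq G] {S M : Set X}
    (hS : Syndetic (G := G) S) (F : Finset G) (h : ∀ x ∈ S, ∃ g ∈ F, g • x ∈ M) :
    Syndetic (G := G) M := by
  obtain ⟨L, hL⟩ := syndetic_iff.1 hS
  refine syndetic_iff.2 ⟨F * L, fun x => ?_⟩
  obtain ⟨l, hl, hlx⟩ := hL x
  obtain ⟨g, hg, hgx⟩ := h _ hlx
  exact ⟨g * l, Finset.mul_mem_mul hg hl, by rwa [mul_smul]⟩

def IsIndependent (D : Finset G) (M : Set X) : Prop :=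
  ∀ x ∈ M, ∀ d ∈ D, d • x ∉ M

lemma IsIndependent.mono {D D' : Finset G} {M : Set X} (hM : IsIndependent D M) (h : D' ⊆ D) :
    IsIndependent D' M :=
  fun x hx d hd => hM x hx d (h hd)

lemma isIndependent_iUnion {D : Finset G} {S : ℕ → Set X} (hmono : Monotone S)
    (hS : ∀ j, IsIndependent D (S j)) : IsIndependent D (⋃ j, S j) := by
  simp only [IsIndependent, mem_iUnion]
  rintro x ⟨a, hxa⟩ d hd ⟨b, hdxb⟩
  exact hS (max a b) x (hmono (le_max_left a b) hxa) d hd (hmono (le_max_right a b) hdxb)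

lemma exists_smul_mem_compl_union_of_isIndependent [DecidableEq G] {U M : Set X} {L : Finset G}
    (hL : ∀ x, ∃ l ∈ L, l • x ∈ Uᶜ) {t : G} (hM : IsIndependent (L * {t} * L⁻¹) M) (x : X) :
    ∃ l ∈ L ∪ L * {t}, l • x ∈ (U ∪ M)ᶜ := by
  obtain ⟨l, hl, hlx⟩ := hL x
  obtain ⟨l', hl', hl'x⟩ := hL (t • x)
  by_cases hlM : l • x ∈ M
  · have hl't : l' * t ∈ L * {t} := Finset.mul_mem_mul hl' (Finset.mem_singleton_self t)
    have hl'x_M := hM _ hlM _ (Finset.mul_mem_mul hl't (Finset.inv_mem_inv hl))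
    rw [smul_smul, inv_mul_cancel_right, mul_smul] at hl'x_M
    exact ⟨l' * t, Finset.mem_union_right _ hl't, by rw [mul_smul]; exact not_or.2 ⟨hl'x, hl'x_M⟩⟩
  · exact ⟨l, Finset.mem_union_left _ hl, not_or.2 ⟨hlx, hlM⟩⟩

def greedyIndependent (D : Finset G) (Y : Set X) (P : ℕ → Set X) : ℕ → Set X
  | 0 => ∅
  | j + 1 => greedyIndependent D Y P j ∪
      {x | x ∈ Y ∩ P j ∧ ∀ d ∈ D, d • x ∉ greedyIndependent D Y P j}

section Greedy

variable {D : Finset G} {Y : Set X} {P : ℕ → Set X}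

lemma greedyIndependent_mono : Monotone (greedyIndependent D Y P) :=
  monotone_nat_of_le_succ fun _ => subset_union_left

lemma greedyIndependent_subset (j : ℕ) : greedyIndependent D Y P j ⊆ Y := by
  induction j with
  | zero => exact empty_subset Y
  | succ j ih => exact union_subset ih fun x hx => hx.1.1

lemma isIndependent_greedyIndependent (hD : ∀ d ∈ D, d⁻¹ ∈ D)
    (hP : ∀ j, IsIndependent D (P j)) (j : ℕ) : IsIndependent D (greedyIndependent D Y P j) := by
  induction j with
  | zero => exact fun x hx => hx.elim
  | succ j ih =>
    rintro x (hx | ⟨⟨-, hxP⟩, hx⟩) d hd (hdx | ⟨⟨-, hdxP⟩, hdx⟩)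
    · exact ih x hx d hd hdx
    · exact hdx d⁻¹ (hD d hd) (by rwa [inv_smul_smul])
    · exact hx d hd hdx
    · exact hP j x hxP d hd hdxP

lemma exists_smul_mem_greedyIndependent [DecidableEq G] (hP : ∀ x, ∃ j, x ∈ P j) {x : X}
    (hx : x ∈ Y) :
    ∃ g ∈ insert 1 D, g • x ∈ ⋃ j, greedyIndependent D Y P j := by
  obtain ⟨j, hxj⟩ := hP x
  by_cases hx' : ∀ d ∈ D, d • x ∉ greedyIndependent D Y P j
  · exact ⟨1, Finset.mem_insert_self 1 D,
      mem_iUnion.2 ⟨j + 1, Or.inr (by rw [one_smul]; exact ⟨⟨hx, hxj⟩, hx'⟩)⟩⟩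
  · push Not at hx'
    obtain ⟨d, hd, hdx⟩ := hx'
    exact ⟨d, Finset.mem_insert_of_mem hd, mem_iUnion.2 ⟨j, hdx⟩⟩

end Greedy

variable [MeasurableSpace X] [MeasurableConstSMul G X]

lemma measurableSet_setOf_forall_smul_notMem (D : Finset G) {S : Set X} (hS : MeasurableSet S) :
    MeasurableSet {x | ∀ d ∈ D, d • x ∉ S} := by
  have : {x | ∀ d ∈ D, d • x ∉ S} = ⋂ d ∈ D, (d • ·) ⁻¹' Sᶜ := by ext; simp
  exact this ▸ D.measurableSet_biInter fun d _ => measurable_const_smul d hS.compl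

lemma measurableSet_greedyIndependent {D : Finset G} {Y : Set X} {P : ℕ → Set X}
    (hY : MeasurableSet Y) (hP : ∀ j, MeasurableSet (P j)) (j : ℕ) :
    MeasurableSet (greedyIndependent D Y P j) := by
  induction j with
  | zero => exact MeasurableSet.empty
  | succ j ih =>
    exact ih.union ((hY.inter (hP j)).inter (measurableSet_setOf_forall_smul_notMem D ih))

variable [TopologicalSpace X] [SecondCountableTopology X] [T1Space X] [OpensMeasurableSpace X]

lemma exists_measurableSet_isIndependent_cover (D : Finset G)
    (hD : ∀ d ∈ D, ∀ x : X, d • x ≠ x) :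
    ∃ P : ℕ → Set X, (∀ j, MeasurableSet (P j)) ∧ (∀ j, IsIndependent D (P j)) ∧
      ∀ x, ∃ j, x ∈ P j := by
  let V := enumerateCountable (TopologicalSpace.countable_countableBasis X) ∅
  have hV_open (j : ℕ) : IsOpen (V j) := by
    rcases range_enumerateCountable_subset _ _ (mem_range_self j) with h | h
    · rw [show V j = ∅ from h]; exact isOpen_empty
    · exact TopologicalSpace.isOpen_of_mem_countableBasis h
  refine ⟨fun j => V j ∩ {x | ∀ d ∈ D, d • x ∉ V j},
    fun j => (hV_open j).measurableSet.inter
      (measurableSet_setOf_forall_smul_notMem D (hV_open j).measurableSet),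
    fun j x hx d hd hdx => hx.2 d hd hdx.1, fun x => ?_⟩
  have hO : IsOpen ((· • x) '' (D : Set G))ᶜ := ((D.finite_toSet.image _).isClosed).isOpen_compl
  have hxO : x ∈ ((· • x) '' (D : Set G))ᶜ := fun ⟨d, hd, hdx⟩ => hD d hd x hdx
  obtain ⟨W, hW, hxW, hWO⟩ :=
    (TopologicalSpace.isBasis_countableBasis X).exists_subset_of_mem_open hxO hO
  obtain ⟨j, hj⟩ := subset_range_enumerate _ ∅ hW
  rw [← show V j = W from hj] at hxW hWO
  exact ⟨j, hxW, fun d hd hdx => hWO hdx ⟨d, hd, rfl⟩⟩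

lemma exists_maximal_isIndependent [DecidableEq G] {D : Finset G}
    (hD : ∀ d ∈ D, ∀ x : X, d • x ≠ x) (hD_inv : ∀ d ∈ D, d⁻¹ ∈ D) {Y : Set X}
    (hY : MeasurableSet Y) :
    ∃ M ⊆ Y, MeasurableSet M ∧ IsIndependent D M ∧ ∀ x ∈ Y, ∃ g ∈ insert 1 D, g • x ∈ M := by
  obtain ⟨P, hPm, hP, hcover⟩ := exists_measurableSet_isIndependent_cover D hD
  exact ⟨⋃ j, greedyIndependent D Y P j, iUnion_subset greedyIndependent_subset,
    .iUnion (measurableSet_greedyIndependent hY hPm),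
    isIndependent_iUnion greedyIndependent_mono (isIndependent_greedyIndependent hD_inv hP),
    fun _ hx => exists_smul_mem_greedyIndependent hcover hx⟩

lemma exists_syndetic_disjoint_of_syndetic_compl [DecidableEq G] [Infinite G]
    (hfree : ∀ (g : G) (x : X), g • x = x → g = 1) {U : Set X} (hU : MeasurableSet U)
    (hUc : Syndetic (G := G) Uᶜ) :
    ∃ M, Disjoint U M ∧ (MeasurableSet M ∧ Syndetic (G := G) M) ∧
      (MeasurableSet (U ∪ M) ∧ Syndetic (G := G) (U ∪ M)ᶜ) := by
  obtain ⟨L, hL⟩ := syndetic_iff.1 hUc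
  obtain ⟨t, ht⟩ := Infinite.exists_notMem_finset (L⁻¹ * L)
  set E := L * {t} * L⁻¹
  have hE : (1 : G) ∉ E := by
    simp only [E, Finset.mem_mul, Finset.mem_singleton, Finset.mem_inv']
    rintro ⟨_, ⟨l', hl', _, rfl, rfl⟩, l, hl, h⟩
    refine ht ?_
    rw [eq_inv_mul_of_mul_eq (mul_eq_one_iff_eq_inv.1 h)]
    exact Finset.mul_mem_mul (Finset.inv_mem_inv hl') hl
  have hD : ∀ d ∈ E ∪ E⁻¹, ∀ x : X, d • x ≠ x := by
    intro d hd x hdx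
    obtain rfl := hfree d x hdx
    simp [Finset.mem_inv', hE] at hd
  have hD_inv : ∀ d ∈ E ∪ E⁻¹, d⁻¹ ∈ E ∪ E⁻¹ := fun d hd => by
    simpa [Finset.mem_inv', or_comm] using hd
  obtain ⟨M, hMU, hM, hMind, hMmax⟩ := exists_maximal_isIndependent hD hD_inv hU.compl
  exact ⟨M, disjoint_left.2 fun x hxU hxM => hMU hxM hxU,
    ⟨hM, hUc.of_forall_exists_smul_mem _ hMmax⟩, hU.union hM,
    syndetic_iff.2 ⟨_, exists_smul_mem_compl_union_of_isIndependent hL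
      (hMind.mono Finset.subset_union_left)⟩⟩

end Action

theorem exists_disjoint_syndetic_sequence_general
    {G : Type*} [Group G] [Infinite G]
    {X : Type*} [MeasurableSpace X] [StandardBorelSpace X] [MulAction G X]
    (hBorel : ∀ g : G, Measurable fun x : X => g • x)
    (hfree : ∀ (g : G) (x : X), g • x = x → g = 1) :
    ∃ M : ℕ → Set X,
      (∀ n, MeasurableSet (M n)) ∧
      (∀ n, Syndetic (G := G) (M n)) ∧
      (∀ m n, m ≠ n → Disjoint (M m) (M n)) := by
  classical
  let := upgradeStandardBorel X
  have : MeasurableConstSMul G X := ⟨hBorel⟩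
  obtain ⟨M, hM, hdisj⟩ := exists_pairwise_disjoint_seq_of_step
    (fun U => MeasurableSet U ∧ Syndetic (G := G) Uᶜ)
    (fun M => MeasurableSet M ∧ Syndetic (G := G) M)
    ⟨.empty, by simpa using syndetic_univ⟩
    fun U hU => exists_syndetic_disjoint_of_syndetic_compl hfree hU.1 hU.2
  exact ⟨M, fun n => (hM n).1, fun n => (hM n).2, fun m n h => hdisj h⟩

/-- Proposition 3.4.(2): for a free Borel action of a countably infinite group there is a
sequence of pairwise disjoint syndetic Borel subsets. -/
theorem exists_disjoint_syndetic_sequence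
    {G : Type*} [Group G] [Countable G] [Infinite G]
    {X : Type*} [MeasurableSpace X] [StandardBorelSpace X] [MulAction G X]
    (hBorel : ∀ g : G, Measurable fun x : X => g • x)
    (hfree : ∀ (g : G) (x : X), g • x = x → g = 1) :
    ∃ M : ℕ → Set X,
      (∀ n, MeasurableSet (M n)) ∧
      (∀ n, Syndetic (G := G) (M n)) ∧
      (∀ m n, m ≠ n → Disjoint (M m) (M n)) :=
  exists_disjoint_syndetic_sequence_general hBorel hfree
end

section
/- Let G be a countably infinite discrete group and let G ↷ X be a free Borel action on a standard Borel space X. Then for any Borel probability measure μ on X and any ε > 0 there exists a syndetic Borel subset M ⊆ X with μ(M) < ε. -/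
/-!
Pick a finite set `T ⊆ G` with `|T| · ε > 1` and let `S = T T⁻¹ \ {1}`. Freeness gives a Borel
proper colouring of the Schreier graph of `S` by countably many colours, and the greedy algorithm,
adding one colour class at a time, produces a Borel maximal `S`-independent set `M`. Maximality
makes `M` syndetic, and independence makes the translates `t⁻¹ M`, `t ∈ T`, pairwise disjoint;
these `|T|` syndetic Borel sets cannot all have measure `≥ ε`.
-/

open MeasureTheory Set

open Pointwise Function

section Syndetic

variable {G X : Type*} [Group G] [MulAction G X] {M : Set X}

theorem syndetic_of_forall_mem_or_exists_smul_mem (S : Finset G)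
    (h : ∀ x, x ∈ M ∨ ∃ s ∈ S, s • x ∈ M) : Syndetic (G := G) M := by
  classical
  refine ⟨insert 1 S⁻¹, fun x => ?_⟩
  rcases h x with hx | ⟨s, hs, hsx⟩
  · exact ⟨1, Finset.mem_insert_self _ _, by simpa using hx⟩
  · exact ⟨s⁻¹, Finset.mem_insert_of_mem (Finset.inv_mem_inv hs), by simpa using hsx⟩

theorem Syndetic.preimage_smul (hM : Syndetic (G := G) M) (g : G) :
    Syndetic (G := G) ((g • ·) ⁻¹' M) := by
  classical
  obtain ⟨F, hF⟩ := hM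
  refine ⟨F.image (· * g), fun x => ?_⟩
  obtain ⟨f, hf, hfx⟩ := hF x
  exact ⟨f * g, Finset.mem_image_of_mem _ hf, by simpa [mul_smul] using hfx⟩

end Syndetic

section Independent

variable {G X : Type*} [Group G] [MulAction G X]

theorem disjoint_preimage_smul_of_smul_notMem {S : Finset G} {M : Set X}
    (hM : ∀ x ∈ M, ∀ s ∈ S, s • x ∉ M) {g h : G} (hgh : h * g⁻¹ ∈ S) :
    Disjoint ((g • ·) ⁻¹' M) ((h • ·) ⁻¹' M) := by
  refine Set.disjoint_left.2 fun x (hgx : g • x ∈ M) (hhx : h • x ∈ M) => ?_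
  exact hM _ hgx _ hgh (by simpa [smul_smul] using hhx)

variable (S : Finset G) (c : X → ℕ)

/-- Stage `n` of the greedy algorithm: the points of colour `< n` selected so far. -/
def greedyIndepStage : ℕ → Set X
  | 0 => ∅
  | n + 1 => greedyIndepStage n ∪ {x | c x = n ∧ ∀ s ∈ S, s • x ∉ greedyIndepStage n}

def greedyIndep : Set X := ⋃ n, greedyIndepStage S c n

theorem monotone_greedyIndepStage : Monotone (greedyIndepStage S c) :=
  monotone_nat_of_le_succ fun _ => subset_union_left

variable {S c}

theorem smul_notMem_greedyIndepStage (hS : ∀ s ∈ S, s⁻¹ ∈ S)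
    (hc : ∀ x, ∀ s ∈ S, c (s • x) ≠ c x) :
    ∀ n, ∀ x ∈ greedyIndepStage S c n, ∀ s ∈ S, s • x ∉ greedyIndepStage S c n
  | 0 => fun _ hx => hx.elim
  | n + 1 => by
    rintro x (hx | ⟨hxn, hxfree⟩) s hs (hsx | ⟨hsxn, hsxfree⟩)
    · exact smul_notMem_greedyIndepStage hS hc n x hx s hs hsx
    · exact hsxfree s⁻¹ (hS s hs) (by simpa using hx)
    · exact hxfree s hs hsx
    · exact hc x s hs (hsxn.trans hxn.symm)

theorem smul_notMem_greedyIndep (hS : ∀ s ∈ S, s⁻¹ ∈ S) (hc : ∀ x, ∀ s ∈ S, c (s • x) ≠ c x) :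
    ∀ x ∈ greedyIndep S c, ∀ s ∈ S, s • x ∉ greedyIndep S c := by
  intro x hx s hs hsx
  obtain ⟨m, hm⟩ := mem_iUnion.1 hx
  obtain ⟨m', hm'⟩ := mem_iUnion.1 hsx
  have mono := monotone_greedyIndepStage S c
  exact smul_notMem_greedyIndepStage hS hc (max m m') x (mono (le_max_left m m') hm) s hs
    (mono (le_max_right m m') hm')

/-- Maximality: a point not selected was rejected at the stage of its own colour. -/
theorem mem_greedyIndep_or_exists_smul_mem (x : X) :
    x ∈ greedyIndep S c ∨ ∃ s ∈ S, s • x ∈ greedyIndep S c := by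
  by_cases hx : x ∈ greedyIndep S c
  · exact Or.inl hx
  right
  have hrejected : x ∉ greedyIndepStage S c (c x + 1) := fun h => hx (mem_iUnion_of_mem _ h)
  simp only [greedyIndepStage, mem_union, mem_ofPred_eq, true_and, not_or, not_forall,
    not_not] at hrejected
  obtain ⟨s, hs, hsx⟩ := hrejected.2
  exact ⟨s, hs, mem_iUnion_of_mem _ hsx⟩

theorem measurableSet_greedyIndep [MeasurableSpace X]
    (hact : ∀ g : G, Measurable fun x : X => g • x) (hc : Measurable c) :
    MeasurableSet (greedyIndep S c) := by
  refine MeasurableSet.iUnion fun n => ?_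
  induction n with
  | zero => exact MeasurableSet.empty
  | succ n ih =>
    have hnew : {x : X | c x = n ∧ ∀ s ∈ S, s • x ∉ greedyIndepStage S c n}
        = c ⁻¹' {n} ∩ ⋂ s ∈ S, (s • ·) ⁻¹' (greedyIndepStage S c n)ᶜ := by
      ext x; simp
    rw [greedyIndepStage, hnew]
    exact ih.union ((hc (measurableSet_singleton n)).inter
      (Finset.measurableSet_biInter S fun s _ => hact s ih.compl))

end Independent

/-- A Borel proper colouring of the Schreier graph of `S`, by the index of the first basic open
set that contains `x` but none of its `S`-neighbours. -/
theorem exists_measurable_coloring {G X : Type*} [Group G] [MulAction G X] [TopologicalSpace X]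
    [SecondCountableTopology X] [T1Space X] [MeasurableSpace X] [OpensMeasurableSpace X]
    (hact : ∀ g : G, Measurable fun x : X => g • x) (S : Finset G)
    (hS : ∀ x : X, ∀ s ∈ S, s • x ≠ x) :
    ∃ c : X → ℕ, Measurable c ∧ ∀ x, ∀ s ∈ S, c (s • x) ≠ c x := by
  classical
  obtain ⟨B, hB⟩ := TopologicalSpace.exists_seq_basis X
  have hsep : ∀ x, ∃ n, x ∈ B n ∧ ∀ s ∈ S, s • x ∉ B n := by
    intro x
    have hfar : x ∈ ((S.image (· • x) : Finset X) : Set X)ᶜ := by simpa using hS x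
    obtain ⟨_, ⟨n, rfl⟩, hxn, hsub⟩ :=
      hB.exists_subset_of_mem_open hfar (Finset.finite_toSet _).isClosed.isOpen_compl
    exact ⟨n, hxn, fun s hs hsx => hsub hsx (by simpa using ⟨s, hs, rfl⟩)⟩
  refine ⟨fun x => Nat.find (hsep x), measurable_find hsep fun n => ?_, fun x s hs hcol => ?_⟩
  · have hBn := (hB.isOpen (mem_range_self n)).measurableSet
    have : {x : X | x ∈ B n ∧ ∀ s ∈ S, s • x ∉ B n} = B n ∩ ⋂ s ∈ S, (s • ·) ⁻¹' (B n)ᶜ := by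
      ext x; simp
    rw [this]
    exact hBn.inter (Finset.measurableSet_biInter S fun s _ => hact s hBn.compl)
  · have hsx := (Nat.find_spec (hsep (s • x))).1
    simp only at hcol
    rw [hcol] at hsx
    exact (Nat.find_spec (hsep x)).2 s hs hsx

theorem exists_measure_lt_of_pairwise_disjoint {ι X : Type*} [MeasurableSpace X] (μ : Measure X)
    {s : Finset ι} {A : ι → Set X} (hA : ∀ i ∈ s, MeasurableSet (A i))
    (hd : (s : Set ι).Pairwise (Disjoint on A)) {ε : ENNReal} (hμ : μ univ < s.card * ε) :
    ∃ i ∈ s, μ (A i) < ε := by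
  refine Finset.exists_lt_of_sum_lt ?_
  calc ∑ i ∈ s, μ (A i) ≤ μ univ :=
        sum_measure_le_measure_univ (fun i hi => (hA i hi).nullMeasurableSet)
          (hd.mono' fun _ _ h => h.aedisjoint)
    _ < ∑ _ ∈ s, ε := by simpa using hμ

theorem exists_small_syndetic_general
    {G : Type*} [Group G] [Infinite G]
    {X : Type*} [MeasurableSpace X] [StandardBorelSpace X] [MulAction G X]
    (hBorel : ∀ g : G, Measurable fun x : X => g • x)
    (hfree : ∀ (g : G) (x : X), g • x = x → g = 1)
    (μ : Measure X) [IsProbabilityMeasure μ] (ε : ℝ) (hε : 0 < ε) :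
    ∃ M : Set X, MeasurableSet M ∧ Syndetic (G := G) M ∧ μ M < ENNReal.ofReal ε := by
  classical
  obtain ⟨_, _, _⟩ := StandardBorelSpace.polish (α := X)
  obtain ⟨n, hn⟩ := ENNReal.exists_nat_mul_gt (ENNReal.ofReal_pos.2 hε).ne' (measure_ne_top μ univ)
  obtain ⟨T, rfl⟩ := Infinite.exists_subset_card_eq G n
  set S := (T * T⁻¹).erase 1
  have hS : ∀ s ∈ S, s⁻¹ ∈ S := by
    simp only [S, Finset.mem_erase, Finset.mem_mul, Finset.mem_inv']
    rintro _ ⟨hne, a, ha, b, hb, rfl⟩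
    exact ⟨by simpa [← mul_inv_rev] using hne, b⁻¹, hb, a⁻¹, by simpa using ha, by simp⟩
  obtain ⟨c, hcm, hc⟩ := exists_measurable_coloring hBorel S
    fun x s hs hsx => (Finset.mem_erase.1 hs).1 (hfree s x hsx)
  set M := greedyIndep S c
  have hM : MeasurableSet M := measurableSet_greedyIndep hBorel hcm
  have hMsyn : Syndetic (G := G) M :=
    syndetic_of_forall_mem_or_exists_smul_mem S mem_greedyIndep_or_exists_smul_mem
  have hdisj : (T : Set G).Pairwise (Disjoint on fun t => (t • ·) ⁻¹' M) :=
    fun t ht t' ht' hne => disjoint_preimage_smul_of_smul_notMem (smul_notMem_greedyIndep hS hc)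
      (Finset.mem_erase.2 ⟨mul_inv_eq_one.not.2 hne.symm, Finset.mul_mem_mul ht' (by simpa)⟩)
  obtain ⟨t, -, ht⟩ := exists_measure_lt_of_pairwise_disjoint μ (fun t _ => hM.preimage (hBorel t))
    hdisj hn
  exact ⟨_, hM.preimage (hBorel t), hMsyn.preimage_smul t, ht⟩

/-- Proposition 3.4 (consequence): for any Borel probability measure `μ` and any `ε > 0`
there is a syndetic Borel set of measure less than `ε`. -/
theorem exists_small_syndetic
    {G : Type*} [Group G] [Countable G] [Infinite G]
    {X : Type*} [MeasurableSpace X] [StandardBorelSpace X] [MulAction G X]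
    (hBorel : ∀ g : G, Measurable fun x : X => g • x)
    (hfree : ∀ (g : G) (x : X), g • x = x → g = 1)
    (μ : Measure X) [IsProbabilityMeasure μ] (ε : ℝ) (hε : 0 < ε) :
    ∃ M : Set X, MeasurableSet M ∧ Syndetic (G := G) M ∧ μ M < ENNReal.ofReal ε :=
  exists_small_syndetic_general hBorel hfree μ ε hε
end

section
/- Let G be a countable group and let G ↷ X be a free Borel action of G on a standard Borel space X. Let S ⊆ G be finite and let Y ⊆ X be Borel. Then there exists a Borel set D ⊆ Y such that S·y ∩ S·y' = ∅ for all distinct y, y' ∈ D, and which is maximal with this property: for every y ∈ Y \ D there exists y' ∈ D with S·y ∩ S·y' ≠ ∅. -/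
open MeasureTheory Set
open scoped Pointwise

/-!
Put `T = S⁻¹S`; `D` is as required iff no point of `D` is moved into `D` by an element of
`T \ {1}`, and every point of `Y \ D` is moved into `D` by an element of `T`. Embedding `X`
measurably into Cantor space and using freeness, `X` is covered by countably many Borel sets `A n`
each of which `T \ {1}` moves off itself. Running the greedy algorithm through `A 0, A 1, …`
(add the points of `A n ∩ Y` not `T`-related to what has been chosen so far) gives `D`; each
stage is Borel because `T` is finite and acts by Borel maps.
-/

universe u v

variable {G : Type u} {X : Type v} [Group G] [MulAction G X]

def IsSmulIndependent (T : Finset G) (D : Set X) : Prop :=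
  ∀ x ∈ D, ∀ t ∈ T, t • x ∈ D → t = 1

theorem exists_measurable_isSmulIndependent_cover
    [MeasurableSpace X] [MeasurableSpace.CountablySeparated X]
    (hBorel : ∀ g : G, Measurable fun x : X => g • x)
    (hfree : ∀ (g : G) (x : X), g • x = x → g = 1) (T : Finset G) :
    ∃ A : ℕ → Set X, (∀ n, MeasurableSet (A n)) ∧ (∀ n, IsSmulIndependent T (A n)) ∧
      ⋃ n, A n = univ := by
  classical
  obtain ⟨φ, hφ, hφinj⟩ := MeasurableSpace.measurable_injection_nat_bool_of_countablySeparated X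
  -- a colour `c` records, for each `t ∈ T \ {1}`, a coordinate where `φ x` and `φ (t • x)` differ
  let B : (T.erase 1 → ℕ × Bool) → Set X := fun c =>
    ⋂ t : T.erase 1, {x | φ x (c t).1 = (c t).2 ∧ φ ((t : G) • x) (c t).1 ≠ (c t).2}
  have hBm (c) : MeasurableSet (B c) := by
    refine MeasurableSet.iInter fun t => MeasurableSet.inter ?_ (MeasurableSet.compl ?_)
    · exact (measurable_pi_apply _).comp hφ (measurableSet_singleton _)
    · exact ((measurable_pi_apply _).comp (hφ.comp (hBorel _))) (measurableSet_singleton _)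
  have hBind (c) : IsSmulIndependent T (B c) := by
    intro x hx t ht htx
    by_contra h1
    exact (mem_iInter.mp hx ⟨t, Finset.mem_erase.mpr ⟨h1, ht⟩⟩).2
      (mem_iInter.mp htx ⟨t, Finset.mem_erase.mpr ⟨h1, ht⟩⟩).1
  have hBcover (x : X) : ∃ c, x ∈ B c := by
    have hsep (t : T.erase 1) : ∃ n, φ x n ≠ φ ((t : G) • x) n := by
      by_contra! h
      exact (Finset.mem_erase.mp t.2).1 (hfree _ _ (hφinj (funext h)).symm)
    choose n hn using hsep
    exact ⟨fun t => (n t, φ x (n t)), mem_iInter.mpr fun t => ⟨rfl, (hn t).symm⟩⟩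
  obtain ⟨e, he⟩ := exists_surjective_nat (T.erase 1 → ℕ × Bool)
  refine ⟨fun n => B (e n), fun n => hBm _, fun n => hBind _, eq_univ_of_forall fun x => ?_⟩
  obtain ⟨c, hc⟩ := hBcover x
  obtain ⟨n, rfl⟩ := he c
  exact mem_iUnion.mpr ⟨n, hc⟩

def greedyStage (T : Finset G) (Y : Set X) (A : ℕ → Set X) : ℕ → Set X
  | 0 => ∅
  | n + 1 => greedyStage T Y A n ∪
      (A n ∩ Y) \ ⋃ t ∈ T, (fun x => t • x) ⁻¹' greedyStage T Y A n

section Greedy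

variable {T : Finset G} {Y : Set X} {A : ℕ → Set X}

theorem measurableSet_greedyStage [MeasurableSpace X]
    (hBorel : ∀ g : G, Measurable fun x : X => g • x)
    (hA : ∀ n, MeasurableSet (A n)) (hY : MeasurableSet Y) (n : ℕ) :
    MeasurableSet (greedyStage T Y A n) := by
  induction n with
  | zero => exact MeasurableSet.empty
  | succ n ih =>
    exact ih.union (((hA n).inter hY).diff
      (MeasurableSet.biUnion T.countable_toSet fun t _ => hBorel t ih))

theorem monotone_greedyStage : Monotone (greedyStage T Y A) :=
  monotone_nat_of_le_succ fun _ => subset_union_left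

theorem greedyStage_subset (n : ℕ) : greedyStage T Y A n ⊆ Y := by
  induction n with
  | zero => exact empty_subset _
  | succ n ih => exact union_subset ih fun _ hx => hx.1.2

theorem exists_mem_greedyStage_succ {x : X} (hx : x ∈ ⋃ m, greedyStage T Y A m) :
    ∃ n, x ∈ A n ∧ (∀ t ∈ T, t • x ∉ greedyStage T Y A n) ∧ x ∈ greedyStage T Y A (n + 1) := by
  obtain ⟨m, hx⟩ := mem_iUnion.mp hx
  induction m with
  | zero => exact absurd hx (notMem_empty x)
  | succ k ih =>
    rcases hx with hx | hx
    · exact ih hx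
    · exact ⟨k, hx.1.1, fun t ht htx => hx.2 (mem_biUnion ht htx), Or.inr hx⟩

theorem isSmulIndependent_iUnion_greedyStage (hT : ∀ t ∈ T, t⁻¹ ∈ T)
    (hA : ∀ n, IsSmulIndependent T (A n)) : IsSmulIndependent T (⋃ n, greedyStage T Y A n) := by
  intro x hx t ht htx
  obtain ⟨n, hxA, hxfree, hxn⟩ := exists_mem_greedyStage_succ hx
  obtain ⟨m, htxA, htxfree, htxm⟩ := exists_mem_greedyStage_succ htx
  rcases lt_trichotomy m n with hmn | rfl | hnm
  · exact absurd (monotone_greedyStage hmn htxm) (hxfree t ht)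
  · exact hA m x hxA t ht htxA
  · refine absurd ?_ (htxfree t⁻¹ (hT t ht))
    rw [inv_smul_smul]
    exact monotone_greedyStage hnm hxn

theorem exists_smul_mem_iUnion_greedyStage (hcover : Y ⊆ ⋃ n, A n) {y : X} (hy : y ∈ Y)
    (hyD : y ∉ ⋃ n, greedyStage T Y A n) : ∃ t ∈ T, t • y ∈ ⋃ n, greedyStage T Y A n := by
  obtain ⟨n, hyA⟩ := mem_iUnion.mp (hcover hy)
  by_contra! h
  refine hyD (mem_iUnion_of_mem (n + 1) (Or.inr ⟨⟨hyA, hy⟩, ?_⟩))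
  simp only [mem_iUnion₂, mem_preimage, not_exists]
  exact fun t ht hty => h t ht (mem_iUnion_of_mem n hty)

end Greedy

theorem exists_maximal_S_disjoint_set_general
    {G : Type*} [Group G]
    {X : Type*} [MeasurableSpace X] [StandardBorelSpace X] [MulAction G X]
    (hBorel : ∀ g : G, Measurable fun x : X => g • x)
    (hfree : ∀ (g : G) (x : X), g • x = x → g = 1)
    (S : Finset G) (Y : Set X) (hY : MeasurableSet Y) :
    ∃ D : Set X, MeasurableSet D ∧ D ⊆ Y ∧
      (∀ y ∈ D, ∀ y' ∈ D, y ≠ y' → ∀ s ∈ S, ∀ s' ∈ S, s • y ≠ s' • y') ∧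
      (∀ y ∈ Y, y ∉ D → ∃ y' ∈ D, ∃ s ∈ S, ∃ s' ∈ S, s • y = s' • y') := by
  classical
  obtain ⟨A, hAm, hAind, hAcover⟩ :=
    exists_measurable_isSmulIndependent_cover hBorel hfree (S⁻¹ * S)
  have hT : ∀ t ∈ S⁻¹ * S, t⁻¹ ∈ S⁻¹ * S := fun t ht => by
    simpa only [mul_inv_rev, inv_inv] using Finset.inv_mem_inv ht
  set D := ⋃ n, greedyStage (S⁻¹ * S) Y A n
  have hDind : IsSmulIndependent (S⁻¹ * S) D := isSmulIndependent_iUnion_greedyStage hT hAind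
  refine ⟨D, MeasurableSet.iUnion (measurableSet_greedyStage hBorel hAm hY),
    iUnion_subset greedyStage_subset, fun y hy y' hy' hne s hs s' hs' heq => hne ?_,
    fun y hy hyD => ?_⟩
  · have := hDind y hy (s'⁻¹ * s) (Finset.mul_mem_mul (Finset.inv_mem_inv hs') hs)
      (by rwa [mul_smul, heq, inv_smul_smul])
    obtain rfl : s' = s := inv_mul_eq_one.mp this
    exact smul_left_cancel s' heq
  · obtain ⟨t, ht, htD⟩ := exists_smul_mem_iUnion_greedyStage (hAcover ▸ subset_univ Y) hy hyD
    obtain ⟨a, ha, s, hs, rfl⟩ := Finset.mem_mul.mp ht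
    exact ⟨_, htD, s, hs, a⁻¹, Finset.mem_inv'.mp ha, by rw [smul_smul, inv_mul_cancel_left]⟩

/-- Lemma 3.2: for a free Borel action `G ↷ X`, a finite `S ⊆ G` and Borel `Y ⊆ X`, there
is a Borel set `D ⊆ Y` whose points have pairwise disjoint `S`-translates, and which is
maximal with this property. -/
theorem exists_maximal_S_disjoint_set
    {G : Type*} [Group G] [Countable G]
    {X : Type*} [MeasurableSpace X] [StandardBorelSpace X] [MulAction G X]
    (hBorel : ∀ g : G, Measurable fun x : X => g • x)
    (hfree : ∀ (g : G) (x : X), g • x = x → g = 1)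
    (S : Finset G) (Y : Set X) (hY : MeasurableSet Y) :
    ∃ D : Set X, MeasurableSet D ∧ D ⊆ Y ∧
      (∀ y ∈ D, ∀ y' ∈ D, y ≠ y' → ∀ s ∈ S, ∀ s' ∈ S, s • y ≠ s' • y') ∧
      (∀ y ∈ Y, y ∉ D → ∃ y' ∈ D, ∃ s ∈ S, ∃ s' ∈ S, s • y = s' • y') :=
  exists_maximal_S_disjoint_set_general hBorel hfree S Y hY
end

section
/- Let G be a countably infinite group, let B, C ⊆ G be finite sets, and let r > 0 be a real number. Then there exist finite sets Λ ⊆ F ⊆ G such that: (i) C ⊆ F; (ii) B·Λ ⊆ F; (iii) B·λ ∩ B·λ' = ∅ for all distinct λ, λ' ∈ Λ; (iv) B·Λ ∩ C = ∅; and (v) |Λ| ≥ log₂(r·|F|²) + r. -/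
/-!
Choose `Λ` greedily, one element at a time: a new `x` only has to avoid the finite set
`Λ ∪ B⁻¹ * (C ∪ B * Λ)`, which is possible because `G` is infinite. With `F = C ∪ B * Λ ∪ Λ`
we get `|F| ≤ K |Λ|` for `K = |C| + |B| + 1`, so the required inequality reads
`log₂ (r K² n²) + r ≤ n` for `n = |Λ|`, which holds for large `n` because `log` grows slower
than the identity.
-/

open Filter Finset Real
open scoped Pointwise

theorem eventually_logb_two_mul_sq_add_le (a r : ℝ) (ha : 0 < a) :
    ∀ᶠ x : ℝ in atTop, logb 2 (a * x ^ 2) + r ≤ x := by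
  have hlog2 : 0 < log 2 := log_pos one_lt_two
  filter_upwards [isLittleO_log_id_atTop.bound (c := log 2 / 4) (by positivity),
    eventually_gt_atTop 0, eventually_ge_atTop (2 * (logb 2 a + r))] with x hlog hx hxa
  have hlogx : log x ≤ log 2 / 4 * x := by
    simpa [abs_of_pos hx] using (le_abs_self _).trans hlog
  have hlogbx : 2 * logb 2 x ≤ x / 2 := by
    rw [logb, mul_div_assoc', div_le_iff₀ hlog2]
    nlinarith
  rw [logb_mul ha.ne' (by positivity), logb_pow]
  push_cast
  linarith

section Separated

variable {G : Type*} [Group G] [DecidableEq G]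

theorem exists_insert_separated [Infinite G] {B C Λ : Finset G}
    (hΛ : ∀ l ∈ Λ, ∀ l' ∈ Λ, l ≠ l' → ∀ b ∈ B, ∀ b' ∈ B, b * l ≠ b' * l')
    (hΛC : ∀ b ∈ B, ∀ l ∈ Λ, b * l ∉ C) :
    ∃ x ∉ Λ, (∀ l ∈ insert x Λ, ∀ l' ∈ insert x Λ, l ≠ l' → ∀ b ∈ B, ∀ b' ∈ B, b * l ≠ b' * l') ∧
      ∀ b ∈ B, ∀ l ∈ insert x Λ, b * l ∉ C := by
  obtain ⟨x, hx⟩ := Infinite.exists_notMem_finset (Λ ∪ B⁻¹ * (C ∪ B * Λ))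
  have hxB : ∀ b ∈ B, b * x ∉ C ∪ B * Λ := fun b hb h =>
    hx (mem_union_right _ (mem_mul.2 ⟨b⁻¹, inv_mem_inv hb, b * x, h, by group⟩))
  have hxΛ : ∀ b ∈ B, ∀ b' ∈ B, ∀ l ∈ Λ, b * x ≠ b' * l := fun b hb b' hb' l hl h =>
    hxB b hb (mem_union_right _ (mem_mul.2 ⟨b', hb', l, hl, h.symm⟩))
  refine ⟨x, fun h => hx (mem_union_left _ h), ?_, ?_⟩
  · intro l hl l' hl' hne b hb b' hb'
    rcases mem_insert.1 hl with rfl | hlΛ <;> rcases mem_insert.1 hl' with rfl | hl'Λ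
    · exact absurd rfl hne
    · exact hxΛ b hb b' hb' l' hl'Λ
    · exact (hxΛ b' hb' b hb l hlΛ).symm
    · exact hΛ l hlΛ l' hl'Λ hne b hb b' hb'
  · intro b hb l hl
    rcases mem_insert.1 hl with rfl | hlΛ
    · exact fun h => hxB b hb (mem_union_left _ h)
    · exact hΛC b hb l hlΛ

theorem exists_separated_finset_card_eq [Infinite G] (B C : Finset G) (n : ℕ) :
    ∃ Λ : Finset G, #Λ = n ∧
      (∀ l ∈ Λ, ∀ l' ∈ Λ, l ≠ l' → ∀ b ∈ B, ∀ b' ∈ B, b * l ≠ b' * l') ∧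
      ∀ b ∈ B, ∀ l ∈ Λ, b * l ∉ C := by
  induction n with
  | zero => exact ⟨∅, rfl, by simp, by simp⟩
  | succ n ih =>
    obtain ⟨Λ, hcard, hΛ, hΛC⟩ := ih
    obtain ⟨x, hx, hxΛ, hxΛC⟩ := exists_insert_separated hΛ hΛC
    exact ⟨insert x Λ, by rw [card_insert_of_notMem hx, hcard], hxΛ, hxΛC⟩

end Separated

theorem card_union_mul_union_le {G : Type*} [Mul G] [DecidableEq G] (B C Λ : Finset G)
    (hΛ : Λ.Nonempty) : #(C ∪ B * Λ ∪ Λ) ≤ (#C + #B + 1) * #Λ :=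
  calc #(C ∪ B * Λ ∪ Λ) ≤ #(C ∪ B * Λ) + #Λ := card_union_le _ _
    _ ≤ #C + #(B * Λ) + #Λ := by grw [card_union_le]
    _ ≤ #C + #B * #Λ + #Λ := by grw [card_mul_le]
    _ ≤ (#C + #B + 1) * #Λ := by
        have := Nat.le_mul_of_pos_right #C hΛ.card_pos
        linarith

theorem counting_lemma_general
    {G : Type*} [Group G] [Infinite G] [DecidableEq G]
    (B C : Finset G) (r : ℝ) (hr : 0 < r) :
    ∃ Λ F : Finset G, Λ ⊆ F ∧
      C ⊆ F ∧
      B * Λ ⊆ F ∧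
      (∀ l ∈ Λ, ∀ l' ∈ Λ, l ≠ l' → ∀ b ∈ B, ∀ b' ∈ B, b * l ≠ b' * l') ∧
      (∀ b ∈ B, ∀ l ∈ Λ, b * l ∉ C) ∧
      Real.logb 2 (r * (F.card : ℝ) ^ 2) + r ≤ (Λ.card : ℝ) := by
  set K : ℕ := #C + #B + 1
  obtain ⟨n, hn, hn1⟩ := ((tendsto_natCast_atTop_atTop.eventually
    (eventually_logb_two_mul_sq_add_le (r * K ^ 2) r (by positivity))).and
    (eventually_ge_atTop 1)).exists
  obtain ⟨Λ, rfl, hΛ, hΛC⟩ := exists_separated_finset_card_eq B C n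
  have hΛne : Λ.Nonempty := card_pos.1 hn1
  refine ⟨Λ, C ∪ B * Λ ∪ Λ, subset_union_right, subset_union_left.trans subset_union_left,
    subset_union_right.trans subset_union_left, hΛ, hΛC, ?_⟩
  have hF : (#(C ∪ B * Λ ∪ Λ) : ℝ) ≤ K * #Λ := mod_cast card_union_mul_union_le B C Λ hΛne
  have hF0 : (0 : ℝ) < #(C ∪ B * Λ ∪ Λ) :=
    mod_cast (hΛne.mono subset_union_right).card_pos
  have hmono : logb 2 (r * #(C ∪ B * Λ ∪ Λ) ^ 2) ≤ logb 2 (r * K ^ 2 * #Λ ^ 2) :=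
    logb_le_logb_of_le one_lt_two (by positivity) (by rw [mul_assoc, ← mul_pow]; gcongr)
  linarith

/-- Lemma 4.1 (counting lemma): for finite `B, C ⊆ G` in a countably infinite group and
`r > 0` there are finite sets `Λ ⊆ F ⊆ G` with (i) `C ⊆ F`, (ii) `B·Λ ⊆ F`,
(iii) the translates `B·λ`, `λ ∈ Λ`, pairwise disjoint, (iv) `B·Λ ∩ C = ∅`, and
(v) `|Λ| ≥ log₂ (r·|F|²) + r`. -/
theorem counting_lemma
    {G : Type*} [Group G] [Countable G] [Infinite G] [DecidableEq G]
    (B C : Finset G) (r : ℝ) (hr : 0 < r) :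
    ∃ Λ F : Finset G, Λ ⊆ F ∧
      C ⊆ F ∧
      B * Λ ⊆ F ∧
      (∀ l ∈ Λ, ∀ l' ∈ Λ, l ≠ l' → ∀ b ∈ B, ∀ b' ∈ B, b * l ≠ b' * l') ∧
      (∀ b ∈ B, ∀ l ∈ Λ, b * l ∉ C) ∧
      Real.logb 2 (r * (F.card : ℝ) ^ 2) + r ≤ (Λ.card : ℝ) :=
  counting_lemma_general B C r hr
end

section
/- Let G be a countable group, let G ↷ Y be a Borel action of G on a standard Borel space Y, let ν be a Borel probability measure on Y, and let P be a countable generating partition for G ↷ (Y, ν). Then for every g ∈ G, ν(Fix_Y(g)) = inf { Σ_{P ∈ P^Q} ν(g·P ∩ P) : Q ⊆ G finite }, where P^Q denotes the common refinement ⋁_{h ∈ Q} h·P and Fix_Y(g) = {y ∈ Y : g·y = y}. -/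
/-!
Write `D_Q` for the set of points `y` such that `y` and `g⁻¹ • y` lie in the same cell of `P^Q`.
The cells of `P^Q` are disjoint, so the sum in the statement is `ν D_Q`, and `D_Q` contains every
fixed point of `g`. As `Q` grows the sets `D_Q` decrease, so `⨅_Q ν D_Q = ν (⋂_Q D_Q)` by
countability of the finite subsets of `G`. A point of the invariant conull set `Y₀` which is not
fixed by `g` is separated from `g⁻¹ • y` by some `h • P`, so it leaves `D_{h⁻¹}`; hence
`⋂_Q D_Q ⊆ Fix(g) ∪ Y₀ᶜ`.
-/

open Function MeasureTheory Set
open scoped Pointwise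

namespace MulAction

variable {G Y : Type*} [Group G] [MulAction G Y]

def refinementCell (P : ℕ → Set Y) (Q : Finset G) (σ : Q → ℕ) : Set Y :=
  ⋂ h : Q, (h : G) • P (σ h)

/-- The points `y` such that `y` and `g⁻¹ • y` lie in the same cell of `P^Q`. -/
def sameCellSet (P : ℕ → Set Y) (Q : Finset G) (g : G) : Set Y :=
  {y | ∀ h ∈ Q, ∃ n, h⁻¹ • y ∈ P n ∧ h⁻¹ • g⁻¹ • y ∈ P n}

variable {P : ℕ → Set Y}

theorem mem_refinementCell {Q : Finset G} {σ : Q → ℕ} {y : Y} :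
    y ∈ refinementCell P Q σ ↔ ∀ h : Q, (h : G)⁻¹ • y ∈ P (σ h) := by
  simp only [refinementCell, mem_iInter, mem_smul_set_iff_inv_smul_mem]

theorem pairwise_disjoint_refinementCell (hP : Pairwise (Disjoint on P)) (Q : Finset G) :
    Pairwise (Disjoint on refinementCell P Q) := by
  intro σ τ hστ
  obtain ⟨h, hh⟩ := Function.ne_iff.mp hστ
  exact disjoint_left.mpr fun y hσ hτ =>
    disjoint_left.mp (hP hh) (mem_refinementCell.mp hσ h) (mem_refinementCell.mp hτ h)

theorem iUnion_smul_inter_refinementCell (Q : Finset G) (g : G) :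
    ⋃ σ, g • refinementCell P Q σ ∩ refinementCell P Q σ = sameCellSet P Q g := by
  ext y
  simp only [mem_iUnion, mem_inter_iff, mem_smul_set_iff_inv_smul_mem, mem_refinementCell]
  constructor
  · rintro ⟨σ, hgy, hy⟩ h hh
    exact ⟨σ ⟨h, hh⟩, hy ⟨h, hh⟩, hgy ⟨h, hh⟩⟩
  · intro H
    choose σ hy hgy using H
    exact ⟨fun h => σ h h.2, fun h => hgy h h.2, fun h => hy h h.2⟩

section Measurable

variable [MeasurableSpace Y] (hsmul : ∀ g : G, Measurable fun y : Y => g • y)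
include hsmul

theorem measurableSet_smul_set_of_measurable_smul {s : Set Y} (hs : MeasurableSet s) (g : G) :
    MeasurableSet (g • s) :=
  preimage_smul_inv g s ▸ hsmul g⁻¹ hs

theorem measurableSet_refinementCell (hPm : ∀ n, MeasurableSet (P n)) (Q : Finset G)
    (σ : Q → ℕ) : MeasurableSet (refinementCell P Q σ) :=
  .iInter fun h => measurableSet_smul_set_of_measurable_smul hsmul (hPm _) h

theorem measurableSet_smul_inter_refinementCell (hPm : ∀ n, MeasurableSet (P n))
    (Q : Finset G) (σ : Q → ℕ) (g : G) :
    MeasurableSet (g • refinementCell P Q σ ∩ refinementCell P Q σ) :=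
  have hcell := measurableSet_refinementCell hsmul hPm Q σ
  (measurableSet_smul_set_of_measurable_smul hsmul hcell g).inter hcell

theorem tsum_measure_smul_inter_refinementCell (hPm : ∀ n, MeasurableSet (P n))
    (hP : Pairwise (Disjoint on P)) (ν : Measure Y) (Q : Finset G) (g : G) :
    ∑' σ, ν (g • refinementCell P Q σ ∩ refinementCell P Q σ) = ν (sameCellSet P Q g) := by
  rw [← iUnion_smul_inter_refinementCell, measure_iUnion]
  · exact fun σ τ hστ =>
      (pairwise_disjoint_refinementCell hP Q hστ).mono inter_subset_right inter_subset_right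
  · exact fun σ => measurableSet_smul_inter_refinementCell hsmul hPm Q σ g

theorem measurableSet_sameCellSet (hPm : ∀ n, MeasurableSet (P n))
    (Q : Finset G) (g : G) : MeasurableSet (sameCellSet P Q g) := by
  rw [← iUnion_smul_inter_refinementCell]
  exact .iUnion fun σ => measurableSet_smul_inter_refinementCell hsmul hPm Q σ g

end Measurable

theorem setOf_smul_eq_self_subset_sameCellSet (hPcover : ⋃ n, P n = univ) (Q : Finset G)
    (g : G) : {y : Y | g • y = y} ⊆ sameCellSet P Q g := by
  intro y hy h _
  obtain ⟨n, hn⟩ := mem_iUnion.mp (hPcover ▸ mem_univ (h⁻¹ • y))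
  refine ⟨n, hn, ?_⟩
  rwa [inv_smul_eq_iff.mpr hy.symm]

theorem antitone_sameCellSet (g : G) : Antitone fun Q : Finset G => sameCellSet P Q g :=
  fun _ _ hQ _ hy h hh => hy h (hQ hh)

theorem iInter_sameCellSet_inter_subset (hP : Pairwise (Disjoint on P)) {Y₀ : Set Y} {g : G}
    (hY₀ : g⁻¹ • Y₀ ⊆ Y₀)
    (hsep : ∀ y ∈ Y₀, ∀ y' ∈ Y₀, y ≠ y' → ∃ (h : G) (n : ℕ), h • y ∈ P n ∧ h • y' ∉ P n) :
    (⋂ Q, sameCellSet P Q g) ∩ Y₀ ⊆ {y | g • y = y} := by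
  rintro y ⟨hy, hy₀⟩
  by_contra hfix
  have hne : y ≠ g⁻¹ • y := fun h => hfix (eq_inv_smul_iff.mp h)
  obtain ⟨h, n, hyn, hgyn⟩ := hsep y hy₀ _ (hY₀ (smul_mem_smul_set hy₀)) hne
  obtain ⟨m, hym, hgym⟩ := mem_iInter.mp hy {h⁻¹} h⁻¹ (Finset.mem_singleton_self _)
  rw [inv_inv] at hym hgym
  obtain rfl : m = n := by_contra fun hmn => disjoint_left.mp (hP hmn) hym hyn
  exact hgyn hgym

end MulAction

open MulAction in
theorem measure_fixed_points_eq_iInf_general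
    {G : Type*} [Group G] [Countable G]
    {Y : Type*} [MeasurableSpace Y] [MulAction G Y]
    (hBorel : ∀ g : G, Measurable fun y : Y => g • y)
    (ν : Measure Y) [IsProbabilityMeasure ν]
    (P : ℕ → Set Y)
    (hPmeas : ∀ n, MeasurableSet (P n))
    (hPdisj : ∀ m n : ℕ, m ≠ n → Disjoint (P m) (P n))
    (hPcover : (⋃ n, P n) = Set.univ)
    (hPgen : ∃ Y₀ : Set Y, MeasurableSet Y₀ ∧ (∀ g : G, g • Y₀ ⊆ Y₀) ∧ ν Y₀ᶜ = 0 ∧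
      ∀ y ∈ Y₀, ∀ y' ∈ Y₀, y ≠ y' →
        ∃ (g : G) (n : ℕ), g • y ∈ P n ∧ g • y' ∉ P n)
    (g : G) :
    ν {y : Y | g • y = y} =
      ⨅ Q : Finset G, ∑' σ : (Q → ℕ),
        ν ((g • ⋂ h : Q, (h : G) • P (σ h)) ∩ ⋂ h : Q, (h : G) • P (σ h)) := by
  have hsum (Q : Finset G) := tsum_measure_smul_inter_refinementCell hBorel hPmeas hPdisj ν Q g
  simp only [refinementCell] at hsum
  simp only [hsum]
  refine le_antisymm (le_iInf fun Q => measure_mono ?_) ?_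
  · exact setOf_smul_eq_self_subset_sameCellSet hPcover Q g
  obtain ⟨Y₀, -, hY₀, hY₀null, hsep⟩ := hPgen
  calc ⨅ Q, ν (sameCellSet P Q g)
      = ν (⋂ Q, sameCellSet P Q g) :=
        ((antitone_sameCellSet g).directed_ge.measure_iInter
          (fun Q => (measurableSet_sameCellSet hBorel hPmeas Q g).nullMeasurableSet)
          ⟨∅, measure_ne_top ν _⟩).symm
    _ ≤ ν ({y | g • y = y} ∪ Y₀ᶜ) := measure_mono fun y hy =>
        (em (y ∈ Y₀)).imp (fun hy₀ => iInter_sameCellSet_inter_subset hPdisj (hY₀ g⁻¹) hsep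
          ⟨hy, hy₀⟩) id
    _ ≤ ν {y | g • y = y} := (measure_union_le _ _).trans_eq (by rw [hY₀null, add_zero])

/-- Lemma 4.3: if `P` is a countable generating partition for a Borel action `G ↷ (Y, ν)`
(generating on some `G`-invariant conull set), then for every `g ∈ G`,
`ν (Fix_Y g) = inf { Σ_{P ∈ P^Q} ν (g • P ∩ P) : Q ⊆ G finite }`, where `P^Q` is the common
refinement `⋁_{h ∈ Q} h • P`, whose pieces are the sets `⋂_{h ∈ Q} h • P (σ h)` for
`σ : Q → ℕ`. -/
theorem measure_fixed_points_eq_iInf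
    {G : Type*} [Group G] [Countable G]
    {Y : Type*} [MeasurableSpace Y] [StandardBorelSpace Y] [MulAction G Y]
    (hBorel : ∀ g : G, Measurable fun y : Y => g • y)
    (ν : Measure Y) [IsProbabilityMeasure ν]
    (P : ℕ → Set Y)
    (hPmeas : ∀ n, MeasurableSet (P n))
    (hPdisj : ∀ m n : ℕ, m ≠ n → Disjoint (P m) (P n))
    (hPcover : (⋃ n, P n) = Set.univ)
    (hPgen : ∃ Y₀ : Set Y, MeasurableSet Y₀ ∧ (∀ g : G, g • Y₀ ⊆ Y₀) ∧ ν Y₀ᶜ = 0 ∧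
      ∀ y ∈ Y₀, ∀ y' ∈ Y₀, y ≠ y' →
        ∃ (g : G) (n : ℕ), g • y ∈ P n ∧ g • y' ∉ P n)
    (g : G) :
    ν {y : Y | g • y = y} =
      ⨅ Q : Finset G, ∑' σ : (Q → ℕ),
        ν ((g • ⋂ h : Q, (h : G) • P (σ h)) ∩ ⋂ h : Q, (h : G) • P (σ h)) :=
  measure_fixed_points_eq_iInf_general hBorel ν P hPmeas hPdisj hPcover hPgen g
end
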